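/- arXiv:2006.16939 — 4 statements merged into one kernel-verified Lean document; each statement's English description precedes it below -/
import Mathlib

section
/- With the setup of the compensation function s(x,v), for every price vector p ∈ ℝ^I and every utility level v, the Hicksian demand set {x* : ∃ m*, (m*,x*) minimizes m + p·x over (m,x) ∈ (m₀,∞) × X with u(m,x) ≥ v} equals argmin_{x ∈ X} (s(x,v) + p·x), which equals argmax_{x ∈ X} (V(x,v) - p·x) where V(x,v) := -s(x,v). -/
open Filter Set

/-- Money-extended price of a bundle: `p · x` with money price 1 handled separately. -/
noncomputable def dotp {I : Type*} [Fintype I] (p : I → ℝ) (x : I → ℤ) : ℝ :=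
  ∑ i, p i * (x i : ℝ)

-- A minimizer of `m + c y` over pairs with `f y ≤ m` must sit at the money level `m = f x`.
theorem exists_feasible_minimizer_iff {β : Type*} {X : Set β} {m₀ : ℝ} {f c : β → ℝ}
    {F : ℝ → β → Prop} (hf : ∀ y ∈ X, m₀ < f y) (hF : ∀ y ∈ X, ∀ m > m₀, F m y ↔ f y ≤ m)
    {x : β} (hx : x ∈ X) :
    (∃ m > m₀, F m x ∧ ∀ m' > m₀, ∀ y ∈ X, F m' y → m + c x ≤ m' + c y) ↔
      ∀ y ∈ X, f x + c x ≤ f y + c y := by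
  constructor
  · rintro ⟨m, hm, hFm, hmin⟩ y hy
    have hfx : f x ≤ m := (hF x hx m hm).1 hFm
    have hy_feasible : F (f y) y := (hF y hy (f y) (hf y hy)).2 le_rfl
    linarith [hmin (f y) (hf y hy) y hy hy_feasible]
  · intro hmin
    refine ⟨f x, hf x hx, (hF x hx (f x) (hf x hx)).2 le_rfl, fun m' hm' y hy hFy => ?_⟩
    linarith [hmin y hy, (hF y hy m' hm').1 hFy]

theorem le_apply_iff_le_of_strictMonoOn {f : ℝ → ℝ} {m₀ s m v : ℝ}
    (hmono : StrictMonoOn f (Ioi m₀)) (hs : m₀ < s) (hfs : f s = v) (hm : m₀ < m) :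
    v ≤ f m ↔ s ≤ m := by
  rw [← hfs]
  exact hmono.le_iff_le hs hm

theorem hicksian_demand_eq_argmax_hicksian_valuation_general {I : Type*} [Fintype I]
    (X : Finset (I → ℤ)) (m₀ : ℝ) (u : ℝ → (I → ℤ) → ℝ)
    (hmono : ∀ x ∈ X, StrictMonoOn (fun m => u m x) (Set.Ioi m₀))
    (s : (I → ℤ) → ℝ → ℝ)
    (hs : ∀ x ∈ X, ∀ v : ℝ, s x v > m₀ ∧ u (s x v) x = v)
    (p : I → ℝ) (v : ℝ) :
    {x : I → ℤ | x ∈ X ∧ ∃ m > m₀, u m x ≥ v ∧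
        ∀ m' > m₀, ∀ y ∈ X, u m' y ≥ v → m + dotp p x ≤ m' + dotp p y}
      = {x : I → ℤ | x ∈ X ∧ ∀ y ∈ X, s x v + dotp p x ≤ s y v + dotp p y} ∧
    {x : I → ℤ | x ∈ X ∧ ∀ y ∈ X, s x v + dotp p x ≤ s y v + dotp p y}
      = {x : I → ℤ | x ∈ X ∧ ∀ y ∈ X,
          (-(s y v)) - dotp p y ≤ (-(s x v)) - dotp p x} := by
  have hfeasible : ∀ y ∈ (X : Set (I → ℤ)), ∀ m > m₀, u m y ≥ v ↔ s y v ≤ m :=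
    fun y hy m hm => le_apply_iff_le_of_strictMonoOn (hmono y hy) (hs y hy v).1 (hs y hy v).2 hm
  refine ⟨Set.ext fun x => and_congr_right fun hx => ?_,
    Set.ext fun x => and_congr_right fun _ => forall₂_congr fun y _ => ?_⟩
  · exact exists_feasible_minimizer_iff (fun y hy => (hs y hy v).1) hfeasible hx
  · constructor <;> intro h <;> linarith

/-- the Hicksian demand set (goods bundles appearing in
expenditure-minimizing consumption bundles achieving utility at least `v`)
equals `argmin_{x ∈ X} (s(x,v) + p·x)`, which equals
`argmax_{x ∈ X} (V(x,v) - p·x)` where `V(x,v) = -s(x,v)`. -/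
theorem hicksian_demand_eq_argmax_hicksian_valuation {I : Type*} [Fintype I]
    (X : Finset (I → ℤ)) (m₀ : ℝ) (u : ℝ → (I → ℤ) → ℝ)
    (hcont : ∀ x ∈ X, ContinuousOn (fun m => u m x) (Set.Ioi m₀))
    (hmono : ∀ x ∈ X, StrictMonoOn (fun m => u m x) (Set.Ioi m₀))
    (hbot : ∀ x ∈ X, Tendsto (fun m => u m x) (nhdsWithin m₀ (Set.Ioi m₀)) atBot)
    (htop : ∀ x ∈ X, Tendsto (fun m => u m x) atTop atTop)
    (s : (I → ℤ) → ℝ → ℝ)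
    (hs : ∀ x ∈ X, ∀ v : ℝ, s x v > m₀ ∧ u (s x v) x = v)
    (p : I → ℝ) (v : ℝ) :
    {x : I → ℤ | x ∈ X ∧ ∃ m > m₀, u m x ≥ v ∧
        ∀ m' > m₀, ∀ y ∈ X, u m' y ≥ v → m + dotp p x ≤ m' + dotp p y}
      = {x : I → ℤ | x ∈ X ∧ ∀ y ∈ X, s x v + dotp p x ≤ s y v + dotp p y} ∧
    {x : I → ℤ | x ∈ X ∧ ∀ y ∈ X, s x v + dotp p x ≤ s y v + dotp p y}
      = {x : I → ℤ | x ∈ X ∧ ∀ y ∈ X,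
          (-(s y v)) - dotp p y ≤ (-(s x v)) - dotp p x} :=
  hicksian_demand_eq_argmax_hicksian_valuation_general X m₀ u hmono s hs p v
end

section
/- Let X ⊆ ℤ^I be finite and let F : X × ℝ → (-∞, -m₀) be a function. There exists a utility function u : (m₀,∞) × X → ℝ, continuous and strictly increasing in money and satisfying the limit conditions (u → -∞ as m → m₀⁺, u → ∞ as m → ∞), whose Hicksian valuation at each utility level v is F(·,v), if and only if, for each x ∈ X, the function v ↦ F(x,v) is continuous, strictly decreasing, tends to -m₀ as v → -∞, and tends to -∞ as v → ∞. -/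
open Filter Set Function Topology

/-!
Write `s(x, v) = -F(x, v)` for the compensation function. Both sides of the equivalence say
that, for each bundle `x`, `v ↦ s(x, v)` is an order isomorphism `ℝ ≃o (m₀, ∞)`, and the
utility `m ↦ u(m, x)` is then its inverse on `(m₀, ∞)`. Order isomorphisms between order
topologies are homeomorphisms preserving `atBot` and `atTop`, and `atBot` on the subtype
`(m₀, ∞)` is `𝓝[>] m₀` on `ℝ`; this accounts for continuity and all the limit conditions.
Conversely, such an isomorphism is obtained from a continuous strictly increasing `s` by the
intermediate value theorem, or from a strictly increasing left inverse `u` of `s`.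
-/

section OrderIsoIoi

variable {α X : Type*} [LinearOrder α] [LinearOrder X] {a : X} {s : α → X}

theorem exists_orderIso_Ioi_of_strictMono (hs : StrictMono s) (hmem : ∀ v, a < s v)
    (hsurj : Ioi a ⊆ range s) : ∃ e : α ≃o Ioi a, ∀ v, (e v : X) = s v := by
  have hcod : StrictMono (codRestrict s (Ioi a) hmem) := hs
  refine ⟨hcod.orderIsoOfSurjective _ fun m => ?_, fun _ => rfl⟩
  obtain ⟨v, hv⟩ := hsurj m.2
  exact ⟨v, Subtype.ext hv⟩

theorem exists_orderIso_Ioi_of_leftInverse {u : X → α} (hmem : ∀ v, a < s v)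
    (hu : StrictMonoOn u (Ioi a)) (hus : LeftInverse u s) :
    ∃ e : α ≃o Ioi a, ∀ v, (e v : X) = s v := by
  have hs : StrictMono s := fun v w hvw =>
    (hu.lt_iff_lt (hmem v) (hmem w)).mp (by rwa [hus, hus])
  exact exists_orderIso_Ioi_of_strictMono hs hmem fun m hm =>
    ⟨u m, hu.injOn (hmem _) hm (hus (u m))⟩

theorem exists_orderIso_Ioi_of_continuous [TopologicalSpace α] [PreconnectedSpace α]
    [Nonempty α] [TopologicalSpace X] [OrderClosedTopology X]
    (hc : Continuous s) (hs : StrictMono s) (hmem : ∀ v, a < s v)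
    (hbot : Tendsto s atBot (𝓝 a)) (htop : Tendsto s atTop atTop) :
    ∃ e : α ≃o Ioi a, ∀ v, (e v : X) = s v :=
  exists_orderIso_Ioi_of_strictMono hs hmem fun _ hm =>
    mem_range_of_exists_le_of_exists_ge hc
      ((hbot.eventually_lt_const hm).exists.imp fun _ => le_of_lt)
      (htop.eventually_ge_atTop _).exists

variable [TopologicalSpace α] [OrderTopology α] [TopologicalSpace X] [OrderTopology X]
  [DenselyOrdered X] [NoMaxOrder X]

theorem OrderIso.exists_extend_symm_Ioi [Nonempty α] (e : α ≃o Ioi a) :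
    ∃ u : X → α, ContinuousOn u (Ioi a) ∧ StrictMonoOn u (Ioi a) ∧
      Tendsto u (𝓝[>] a) atBot ∧ Tendsto u atTop atTop ∧ LeftInverse u fun v => (e v : X) := by
  set u := extend ((↑) : Ioi a → X) e.symm fun _ => Classical.arbitrary α
  have hu : (fun m : Ioi a => u m) = e.symm :=
    funext fun m => Subtype.val_injective.extend_apply _ _ m
  refine ⟨u, ?_, ?_, ?_, ?_, fun v => ?_⟩
  · have hcont : Continuous fun m : Ioi a => u m := hu ▸ e.symm.continuous
    exact continuousOn_iff_continuous_domRestrict.mpr hcont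
  · rw [strictMonoOn_iff_strictMono, hu]
    exact e.symm.strictMono
  · rw [← tendsto_comp_coe_Ioi_atBot, hu]
    exact e.symm.tendsto_atBot
  · rw [← tendsto_comp_val_Ioi_atTop, hu]
    exact e.symm.tendsto_atTop
  · exact (congrFun hu (e v)).trans (e.symm_apply_apply v)

theorem exists_strictMonoOn_leftInverse_iff [PreconnectedSpace α] [Nonempty α]
    (hmem : ∀ v, a < s v) :
    (∃ u : X → α, ContinuousOn u (Ioi a) ∧ StrictMonoOn u (Ioi a) ∧
        Tendsto u (𝓝[>] a) atBot ∧ Tendsto u atTop atTop ∧ LeftInverse u s) ↔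
      Continuous s ∧ StrictMono s ∧ Tendsto s atBot (𝓝 a) ∧ Tendsto s atTop atTop := by
  constructor
  · rintro ⟨u, -, hu, -, -, hus⟩
    obtain ⟨e, he⟩ := exists_orderIso_Ioi_of_leftInverse hmem hu hus
    obtain rfl : (fun v => (e v : X)) = s := funext he
    refine ⟨continuous_subtype_val.comp e.continuous, Subtype.strictMono_coe _ |>.comp e.strictMono,
      ?_, tendsto_Ioi_atTop.mp e.tendsto_atTop⟩
    have hcoe : Tendsto ((↑) : Ioi a → X) atBot (𝓝[>] a) := by
      rw [← map_coe_Ioi_atBot]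
      exact tendsto_map
    exact (hcoe.comp e.tendsto_atBot).mono_right nhdsWithin_le_nhds
  · rintro ⟨hc, hs, hbot, htop⟩
    obtain ⟨e, he⟩ := exists_orderIso_Ioi_of_continuous hc hs hmem hbot htop
    obtain rfl : (fun v => (e v : X)) = s := funext he
    exact e.exists_extend_symm_Ioi

end OrderIsoIoi

theorem continuous_strictMono_tendsto_neg_iff {α : Type*} [TopologicalSpace α] [Preorder α]
    {f : α → ℝ} {a : ℝ} :
    (Continuous (fun v => -f v) ∧ StrictMono (fun v => -f v) ∧
        Tendsto (fun v => -f v) atBot (𝓝 a) ∧ Tendsto (fun v => -f v) atTop atTop) ↔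
      Continuous f ∧ StrictAnti f ∧ Tendsto f atBot (𝓝 (-a)) ∧ Tendsto f atTop atBot := by
  constructor
  · rintro ⟨hc, hs, hbot, htop⟩
    rw [show f = fun v => -(-f v) from funext fun v => (neg_neg (f v)).symm]
    exact ⟨hc.neg, hs.neg, hbot.neg, tendsto_neg_atTop_atBot.comp htop⟩
  · rintro ⟨hc, hs, hbot, htop⟩
    exact ⟨hc.neg, hs.neg, neg_neg a ▸ hbot.neg, tendsto_neg_atBot_atTop.comp htop⟩

theorem duality_for_preferences_general {I : Type*}
    (X : Finset (I → ℤ)) (m₀ : ℝ)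
    (F : (I → ℤ) → ℝ → ℝ) (hF : ∀ x ∈ X, ∀ v : ℝ, F x v < -m₀) :
    (∃ u : ℝ → (I → ℤ) → ℝ,
        (∀ x ∈ X, ContinuousOn (fun m => u m x) (Set.Ioi m₀)) ∧
        (∀ x ∈ X, StrictMonoOn (fun m => u m x) (Set.Ioi m₀)) ∧
        (∀ x ∈ X, Tendsto (fun m => u m x) (nhdsWithin m₀ (Set.Ioi m₀)) atBot) ∧
        (∀ x ∈ X, Tendsto (fun m => u m x) atTop atTop) ∧
        (∀ x ∈ X, ∀ v : ℝ, u (-(F x v)) x = v))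
    ↔ (∀ x ∈ X, Continuous (F x) ∧ StrictAnti (F x) ∧
        Tendsto (F x) atBot (nhds (-m₀)) ∧ Tendsto (F x) atTop atBot) := by
  have key (x) (hx : x ∈ X) := (exists_strictMonoOn_leftInverse_iff
    (s := fun v => -F x v) fun v => lt_neg.mpr (hF x hx v)).trans
    continuous_strictMono_tendsto_neg_iff
  constructor
  · rintro ⟨u, hc, hs, hbot, htop, hval⟩ x hx
    exact (key x hx).mp ⟨fun m => u m x, hc x hx, hs x hx, hbot x hx, htop x hx, hval x hx⟩
  · intro h
    have hu (x) : ∃ u : ℝ → ℝ, x ∈ X → ContinuousOn u (Ioi m₀) ∧ StrictMonoOn u (Ioi m₀) ∧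
        Tendsto u (𝓝[>] m₀) atBot ∧ Tendsto u atTop atTop ∧ LeftInverse u fun v => -F x v := by
      by_cases hx : x ∈ X
      · obtain ⟨u, hu⟩ := (key x hx).mpr (h x hx)
        exact ⟨u, fun _ => hu⟩
      · exact ⟨id, fun hx' => absurd hx' hx⟩
    choose u hu using hu
    exact ⟨fun m x => u x m, fun x hx => (hu x hx).1, fun x hx => (hu x hx).2.1,
      fun x hx => (hu x hx).2.2.1, fun x hx => (hu x hx).2.2.2.1, fun x hx => (hu x hx).2.2.2.2⟩

/-- Fact 2, Duality for Preferences: a function `F : X × ℝ → (-∞,-m₀)`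
is the family of Hicksian valuations of some utility function (continuous and strictly
increasing in money with the standard limit conditions, and with compensation function
`s(x,v) = -F(x,v)`) if and only if each `F(x,·)` is continuous, strictly decreasing,
tends to `-m₀` at `-∞` and to `-∞` at `∞`. -/
theorem duality_for_preferences {I : Type*} [Fintype I]
    (X : Finset (I → ℤ)) (m₀ : ℝ)
    (F : (I → ℤ) → ℝ → ℝ) (hF : ∀ x ∈ X, ∀ v : ℝ, F x v < -m₀) :
    (∃ u : ℝ → (I → ℤ) → ℝ,
        (∀ x ∈ X, ContinuousOn (fun m => u m x) (Set.Ioi m₀)) ∧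
        (∀ x ∈ X, StrictMonoOn (fun m => u m x) (Set.Ioi m₀)) ∧
        (∀ x ∈ X, Tendsto (fun m => u m x) (nhdsWithin m₀ (Set.Ioi m₀)) atBot) ∧
        (∀ x ∈ X, Tendsto (fun m => u m x) atTop atTop) ∧
        (∀ x ∈ X, ∀ v : ℝ, u (-(F x v)) x = v))
    ↔ (∀ x ∈ X, Continuous (F x) ∧ StrictAnti (F x) ∧
        Tendsto (F x) atBot (nhds (-m₀)) ∧ Tendsto (F x) atTop atBot) :=
  duality_for_preferences_general X m₀ F hF
end

section
/- Let V : X → ℝ be a valuation on a finite set X ⊆ ℤ^I with demand D(p) = argmax_{x∈X}(V(x) - p·x). Then V is concave in the discrete sense (for each integer point z in the convex hull of X there is a price p with z ∈ D(p)) if and only if for every price vector p, conv(D(p)) ∩ ℤ^I = D(p). -/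
/-- Embedding of integer bundles into `ℝ^I`. -/
noncomputable def coeZR {I : Type*} (x : I → ℤ) : I → ℝ := fun i => (x i : ℝ)

/-!
If `V` is concave and an integral `z` lies in `conv D(p)`, then `z` is demanded at some price `q`;
averaging `V y - q⬝y ≤ V z - q⬝z` over the points `y ∈ D(p)` carrying `z` shows that `z` also
attains the maximum at `p`.

Conversely, integrally convex demand reduces concavity to a duality statement: every `z ∈ conv A`
lies in `conv D(p)` for some price `p`. If `z` lies on a proper face `{⟪d, ·⟫ = ⟪d, z⟫}` of
`conv A`, induct on the points of that face and add a large multiple of `d` to the price, which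
drives the other points out of demand. Otherwise the dual objective
`p ↦ maxᵢ (uᵢ + ⟪p, z - aᵢ⟫)` is coercive on the span of the `z - aᵢ` and constant in the
orthogonal directions, so it has a minimiser; there, a hyperplane separating `z` from `conv D(p)`
would be a descent direction.
-/

open Finset Filter Topology RealInnerProductSpace

lemma eventually_sub_mul_lt {c b M : ℝ} (hc : c ≤ M) (hb : c = M → 0 < b) :
    ∀ᶠ t in 𝓝[>] 0, c - t * b < M := by
  rcases hc.lt_or_eq with hlt | heq
  · have hcont : Tendsto (fun t : ℝ => c - t * b) (𝓝 0) (𝓝 c) := by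
      simpa using (show Continuous fun t : ℝ => c - t * b by fun_prop).tendsto 0
    exact nhdsWithin_le_nhds (hcont.eventually (gt_mem_nhds hlt))
  · filter_upwards [self_mem_nhdsWithin] with t ht
    nlinarith [hb heq, Set.mem_Ioi.1 ht]

lemma eventually_le_add_mul {c s : ℝ} (hs : 0 ≤ s) (hc : s = 0 → 0 ≤ c) :
    ∀ᶠ t in atTop, 0 ≤ c + t * s := by
  rcases hs.lt_or_eq with hpos | hzero
  · filter_upwards [eventually_ge_atTop (-c / s)] with t ht
    rw [div_le_iff₀ hpos] at ht
    linarith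
  · exact Eventually.of_forall fun t => by simp [← hzero, hc hzero.symm]

theorem exists_pos_mul_norm_le {ι F : Type*} [NormedAddCommGroup F] [NormedSpace ℝ F]
    [FiniteDimensional ℝ F] {A : Finset ι} (hA : A.Nonempty) {ℓ : ι → StrongDual ℝ F}
    (hℓ : ∀ q ≠ 0, ∃ i ∈ A, 0 < ℓ i q) : ∃ δ > 0, ∀ q, ∃ i ∈ A, δ * ‖q‖ ≤ ℓ i q := by
  rcases subsingleton_or_nontrivial F with hF | hF
  · obtain ⟨i, hi⟩ := hA
    exact ⟨1, one_pos, fun q => ⟨i, hi, by simp [Subsingleton.elim q 0]⟩⟩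
  have hcont : Continuous fun q => A.sup' hA fun i => ℓ i q :=
    Continuous.finset_sup'_apply hA fun i _ => (ℓ i).continuous
  obtain ⟨q₀, hq₀, hmin⟩ := (isCompact_sphere (0 : F) 1).exists_isMinOn
    (NormedSpace.sphere_nonempty.2 zero_le_one) hcont.continuousOn
  refine ⟨A.sup' hA fun i => ℓ i q₀, ?_, fun q => ?_⟩
  · obtain ⟨i, hi, hpos⟩ := hℓ q₀ (ne_zero_of_mem_unit_sphere ⟨q₀, hq₀⟩)
    exact hpos.trans_le (le_sup' (fun i => ℓ i q₀) hi)
  rcases eq_or_ne q 0 with rfl | hq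
  · obtain ⟨i, hi⟩ := hA
    exact ⟨i, hi, by simp⟩
  have hnorm : ‖q‖ ≠ 0 := norm_ne_zero_iff.2 hq
  obtain ⟨i, hi, hieq⟩ := exists_mem_eq_sup' hA fun i => ℓ i (‖q‖⁻¹ • q)
  have hle := isMinOn_iff.1 hmin _ (show ‖q‖⁻¹ • q ∈ Metric.sphere (0 : F) 1 by
    rw [mem_sphere_zero_iff_norm, norm_smul, norm_inv, norm_norm, inv_mul_cancel₀ hnorm])
  rw [hieq, map_smul, smul_eq_mul] at hle
  refine ⟨i, hi, ?_⟩
  calc _ ≤ ‖q‖ * (‖q‖⁻¹ * ℓ i q) := by rw [mul_comm]; gcongr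
    _ = ℓ i q := by field_simp

section Demand

variable {ι E : Type*} [NormedAddCommGroup E] [InnerProductSpace ℝ E]

def demand (A : Finset ι) (a : ι → E) (u : ι → ℝ) (p : E) : Set ι :=
  {i | i ∈ A ∧ ∀ j ∈ A, u j - ⟪p, a j⟫ ≤ u i - ⟪p, a i⟫}

variable {A : Finset ι} {a : ι → E} {u : ι → ℝ}

lemma demand_subset (p : E) : demand A a u p ⊆ A := fun _ hi => hi.1

theorem mem_demand_of_mem_convexHull {p q : E} {k : ι} (hk : k ∈ demand A a u q)
    (hak : a k ∈ convexHull ℝ (a '' demand A a u p)) : k ∈ demand A a u p := by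
  obtain ⟨_, i, hi, rfl⟩ := convexHull_nonempty_iff.1 ⟨_, hak⟩
  have hbound : a '' demand A a u p ⊆
      {y | ⟪p - q, y⟫ ≤ u k - ⟪q, a k⟫ - (u i - ⟪p, a i⟫)} := by
    rintro _ ⟨j, hj, rfl⟩
    have := hk.2 j hj.1
    have := hj.2 i hi.1
    simp only [Set.mem_ofPred_eq, inner_sub_left]
    linarith
  have hk' := convexHull_min hbound
    (convex_halfSpace_le (innerₛₗ ℝ (p - q)).isLinear _) hak
  refine ⟨hk.1, fun j hj => ?_⟩
  have := hi.2 j hj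
  simp only [Set.mem_ofPred_eq, inner_sub_left] at hk'
  linarith

theorem mem_convexHull_image_filter_of_inner_le {z d : E} (hz : z ∈ convexHull ℝ (a '' A))
    (hd : ∀ i ∈ A, ⟪d, z⟫ ≤ ⟪d, a i⟫) :
    z ∈ convexHull ℝ (a '' A.filter fun i => ⟪d, a i⟫ = ⟪d, z⟫) := by
  classical
  rw [← coe_image, Finset.mem_convexHull'] at hz
  obtain ⟨w, hw0, hw1, hwz⟩ := hz
  have hterm : ∀ y ∈ A.image a, 0 ≤ w y * (⟪d, y⟫ - ⟪d, z⟫) := by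
    intro y hy
    obtain ⟨i, hi, rfl⟩ := mem_image.1 hy
    exact mul_nonneg (hw0 _ hy) (sub_nonneg.2 (hd i hi))
  have hsum : ∑ y ∈ A.image a, w y * (⟪d, y⟫ - ⟪d, z⟫) = 0 :=
    calc _ = ⟪d, ∑ y ∈ A.image a, w y • y⟫ - (∑ y ∈ A.image a, w y) * ⟪d, z⟫ := by
          simp only [mul_sub, sum_sub_distrib, ← sum_mul, inner_sum, real_inner_smul_right]
      _ = 0 := by rw [hwz, hw1, one_mul, sub_self]
  have hface : ∀ y ∈ A.image a, w y ≠ 0 → ⟪d, y⟫ = ⟪d, z⟫ := fun y hy hwy =>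
    sub_eq_zero.1 <|
      (mul_eq_zero.1 ((sum_eq_zero_iff_of_nonneg hterm).1 hsum y hy)).resolve_left hwy
  have hsub : (((A.image a).filter fun y => ⟪d, y⟫ = ⟪d, z⟫) : Set E) ⊆
      a '' A.filter fun i => ⟪d, a i⟫ = ⟪d, z⟫ := by
    intro y hy
    obtain ⟨hy, hyz⟩ := mem_filter.1 hy
    obtain ⟨i, hi, rfl⟩ := mem_image.1 hy
    exact ⟨i, mem_filter.2 ⟨hi, hyz⟩, rfl⟩
  refine convexHull_mono hsub <|
    Finset.mem_convexHull'.2 ⟨w, fun y hy => hw0 y (filter_subset _ _ hy), ?_, ?_⟩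
  · rw [sum_filter_of_ne fun y hy hwy => hface y hy hwy, hw1]
  · rw [sum_filter_of_ne fun y hy hwy => hface y hy (left_ne_zero_of_smul hwy), hwz]

theorem exists_demand_filter_subset_demand_add_smul {z d : E} (hd : ∀ i ∈ A, ⟪d, z⟫ ≤ ⟪d, a i⟫)
    (p : E) : ∃ t : ℝ,
      demand (A.filter fun i => ⟪d, a i⟫ = ⟪d, z⟫) a u p ⊆ demand A a u (p + t • d) := by
  set A' := A.filter fun i => ⟪d, a i⟫ = ⟪d, z⟫
  have hev : ∀ᶠ t in atTop, ∀ i ∈ A, i ∈ demand A' a u p → ∀ j ∈ A,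
      0 ≤ (u i - ⟪p, a i⟫ - (u j - ⟪p, a j⟫)) + t * (⟪d, a j⟫ - ⟪d, z⟫) := by
    simp only [eventually_all_finset, eventually_imp_distrib_left]
    intro i _ hi j hj
    refine eventually_le_add_mul (sub_nonneg.2 (hd j hj)) fun hj0 => ?_
    have := hi.2 j (mem_filter.2 ⟨hj, sub_eq_zero.1 hj0⟩)
    linarith
  obtain ⟨t, ht⟩ := hev.exists
  refine ⟨t, fun i hi => ⟨(mem_filter.1 hi.1).1, fun j hj => ?_⟩⟩
  have hij := ht i (mem_filter.1 hi.1).1 hi j hj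
  have hiz : ⟪d, a i⟫ = ⟪d, z⟫ := (mem_filter.1 hi.1).2
  rw [mul_sub] at hij
  simp only [inner_add_left, real_inner_smul_left, hiz]
  linarith

/-- The Lagrangian dual of maximising `∑ wᵢ uᵢ` over convex weights `w` with `∑ wᵢ • aᵢ = z`. -/
def dualObjective (A : Finset ι) (hA : A.Nonempty) (a : ι → E) (u : ι → ℝ) (z p : E) : ℝ :=
  A.sup' hA fun i => u i + ⟪p, z - a i⟫

lemma continuous_dualObjective (hA : A.Nonempty) (z : E) :
    Continuous (dualObjective A hA a u z) :=
  Continuous.finset_sup'_apply hA fun _ _ =>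
    continuous_const.add (continuous_id.inner continuous_const)

theorem mem_convexHull_image_demand_of_forall_dualObjective_le [CompleteSpace E]
    (hA : A.Nonempty) {z p₀ : E}
    (hmin : ∀ p, dualObjective A hA a u z p₀ ≤ dualObjective A hA a u z p) :
    z ∈ convexHull ℝ (a '' demand A a u p₀) := by
  by_contra hz
  have hclosed : IsClosed (convexHull ℝ (a '' demand A a u p₀)) :=
    (((A.finite_toSet.subset (demand_subset p₀)).image a).isCompact_convexHull ℝ).isClosed
  obtain ⟨f, s, hfs, hsf⟩ :=
    geometric_hahn_banach_closed_point (convex_convexHull ℝ _) hclosed hz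
  set v := (InnerProductSpace.toDual ℝ E).symm f
  set M := dualObjective A hA a u z p₀
  have hdecr : ∀ i ∈ A, ∀ᶠ t : ℝ in 𝓝[>] 0, u i + ⟪p₀ - t • v, z - a i⟫ < M := by
    intro i hi
    have hle : u i + ⟪p₀, z - a i⟫ ≤ M := le_sup' (fun i => u i + ⟪p₀, z - a i⟫) hi
    refine (eventually_sub_mul_lt (b := ⟪v, z - a i⟫) hle fun hiM => ?_).mono fun t ht => ?_
    · have hdem : i ∈ demand A a u p₀ := ⟨hi, fun j hj => by
        have : u j + ⟪p₀, z - a j⟫ ≤ M := le_sup' (fun i => u i + ⟪p₀, z - a i⟫) hj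
        simp only [inner_sub_right] at this hiM
        linarith⟩
      have := hfs _ (subset_convexHull ℝ _ ⟨i, hdem, rfl⟩)
      rw [InnerProductSpace.toDual_symm_apply, map_sub]
      linarith
    · rwa [inner_sub_left, real_inner_smul_left, ← add_sub_assoc]
  obtain ⟨t, ht⟩ := ((eventually_all_finset A).2 hdecr).exists
  exact (hmin (p₀ - t • v)).not_gt ((sup'_lt_iff hA).2 ht)

theorem exists_forall_dualObjective_le (hA : A.Nonempty) (z : E)
    (hnoface : ∀ d, (∀ i ∈ A, ⟪d, z⟫ ≤ ⟪d, a i⟫) → ∀ i ∈ A, ⟪d, a i⟫ = ⟪d, z⟫) :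
    ∃ p₀, ∀ p, dualObjective A hA a u z p₀ ≤ dualObjective A hA a u z p := by
  set W := Submodule.span ℝ ((fun i => z - a i) '' A)
  have : FiniteDimensional ℝ W := FiniteDimensional.span_of_finite ℝ (A.finite_toSet.image _)
  have hmemW : ∀ i ∈ A, z - a i ∈ W := fun i hi => Submodule.subset_span ⟨i, hi, rfl⟩
  have hproj (p : E) :
      dualObjective A hA a u z (W.starProjection p) = dualObjective A hA a u z p := by
    refine sup'_congr hA rfl fun i hi => ?_
    have := W.starProjection_inner_eq_zero p _ (hmemW i hi)
    rw [inner_sub_left] at this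
    linarith
  have hℓ : ∀ i (q : W), (innerSL ℝ (z - a i)).comp W.subtypeL q = ⟪(q : E), z - a i⟫ :=
    fun _ _ => real_inner_comm _ _
  have hpos : ∀ q : W, q ≠ 0 → ∃ i ∈ A, 0 < (innerSL ℝ (z - a i)).comp W.subtypeL q := by
    intro q hq
    by_contra! hle
    simp only [hℓ] at hle
    have hperp : W ≤ LinearMap.ker (innerₛₗ ℝ (q : E)) := by
      refine Submodule.span_le.2 ?_
      rintro _ ⟨i, hi, rfl⟩
      have := hnoface q (fun j hj => by
        have := hle j hj
        rw [inner_sub_right] at this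
        linarith) i hi
      simp [inner_sub_right, this]
    exact hq (Subtype.ext (inner_self_eq_zero.1 (hperp q.2)))
  obtain ⟨δ, hδ, hcoer⟩ := exists_pos_mul_norm_le hA hpos
  have hlower : ∀ q : W, A.inf' hA u + δ * ‖q‖ ≤ dualObjective A hA a u z q := by
    intro q
    obtain ⟨i, hi, hq⟩ := hcoer q
    rw [hℓ] at hq
    calc A.inf' hA u + δ * ‖q‖ ≤ u i + ⟪(q : E), z - a i⟫ := by linarith [inf'_le u hi]
      _ ≤ _ := le_sup' (fun i => u i + ⟪(q : E), z - a i⟫) hi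
  have hcocompact : ∀ᶠ q : W in cocompact W,
      dualObjective A hA a u z 0 ≤ dualObjective A hA a u z q := by
    filter_upwards [tendsto_norm_cocompact_atTop.eventually
      (eventually_ge_atTop ((dualObjective A hA a u z 0 - A.inf' hA u) / δ))] with q hq
    rw [div_le_iff₀ hδ] at hq
    linarith [hlower q]
  obtain ⟨q₀, hq₀⟩ :=
    ((continuous_dualObjective hA z).comp continuous_subtype_val).exists_forall_le' 0 hcocompact
  exact ⟨q₀, fun p => (hq₀ (W.orthogonalProjectionOnto p)).trans_eq (hproj p)⟩

theorem exists_mem_convexHull_image_demand [CompleteSpace E] (A : Finset ι) (a : ι → E)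
    (u : ι → ℝ) {z : E} (hz : z ∈ convexHull ℝ (a '' A)) :
    ∃ p, z ∈ convexHull ℝ (a '' demand A a u p) := by
  induction A using Finset.strongInduction with
  | H A ih =>
  by_cases hface : ∃ d, (∀ i ∈ A, ⟪d, z⟫ ≤ ⟪d, a i⟫) ∧ ∃ i ∈ A, ⟪d, z⟫ < ⟪d, a i⟫
  · obtain ⟨d, hd, i, hi, hlt⟩ := hface
    have hssub : (A.filter fun i => ⟪d, a i⟫ = ⟪d, z⟫) ⊂ A := filter_ssubset.2 ⟨i, hi, hlt.ne'⟩
    obtain ⟨p, hp⟩ := ih _ hssub (mem_convexHull_image_filter_of_inner_le hz hd)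
    obtain ⟨t, ht⟩ := exists_demand_filter_subset_demand_add_smul (u := u) hd p
    exact ⟨p + t • d, convexHull_mono (Set.image_mono ht) hp⟩
  · push Not at hface
    have hA : A.Nonempty := by
      rw [← coe_nonempty, ← Set.image_nonempty (f := a), ← convexHull_nonempty_iff (𝕜 := ℝ)]
      exact ⟨z, hz⟩
    obtain ⟨p₀, hp₀⟩ := exists_forall_dualObjective_le (u := u) hA z
      fun d hd i hi => le_antisymm (hface d hd i hi) (hd i hi)
    exact ⟨p₀, mem_convexHull_image_demand_of_forall_dualObjective_le hA hp₀⟩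

end Demand

lemma inner_toLp_coeZR {I : Type*} [Fintype I] (p : I → ℝ) (x : I → ℤ) :
    ⟪WithLp.toLp 2 p, WithLp.toLp 2 (coeZR x)⟫ = dotp p x := by
  simp [PiLp.inner_apply, dotp, coeZR, mul_comm]

lemma mem_demand_toLp_iff {I : Type*} [Fintype I] (X : Finset (I → ℤ)) (V : (I → ℤ) → ℝ)
    (p : I → ℝ) (x : I → ℤ) :
    x ∈ demand X (fun y => WithLp.toLp 2 (coeZR y)) V (WithLp.toLp 2 p) ↔
      x ∈ X ∧ ∀ y ∈ X, V y - dotp p y ≤ V x - dotp p x := by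
  simp only [demand, inner_toLp_coeZR, Set.mem_ofPred_eq]

lemma coeZR_mem_convexHull_iff {I : Type*} (S : Set (I → ℤ)) (z : I → ℤ) :
    coeZR z ∈ convexHull ℝ (coeZR '' S) ↔
      WithLp.toLp 2 (coeZR z) ∈ convexHull ℝ ((fun y => WithLp.toLp 2 (coeZR y)) '' S) := by
  have h := (WithLp.linearEquiv 2 ℝ (I → ℝ)).symm.toLinearMap.image_convexHull (coeZR '' S)
  rw [Set.image_image] at h
  rw [← (WithLp.toLp_injective 2).mem_set_image]
  exact Eq.to_iff (congrArg (WithLp.toLp 2 (coeZR z) ∈ ·) h)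

/-- characterization of discrete concavity: `V` is concave (every
integer point of `conv(X)` is demanded at some price) iff for every price `p`,
`conv(D(p)) ∩ ℤ^I = D(p)`. -/
theorem concave_iff_demand_integrally_convex {I : Type*} [Fintype I]
    (X : Finset (I → ℤ)) (V : (I → ℤ) → ℝ) :
    (∀ z : I → ℤ, coeZR z ∈ convexHull ℝ (coeZR '' (↑X : Set (I → ℤ))) →
        ∃ p : I → ℝ, z ∈ X ∧ ∀ y ∈ X, V y - dotp p y ≤ V z - dotp p z)
    ↔ (∀ p : I → ℝ, ∀ z : I → ℤ,
        (coeZR z ∈ convexHull ℝ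
            (coeZR '' {x : I → ℤ | x ∈ X ∧ ∀ y ∈ X, V y - dotp p y ≤ V x - dotp p x})
          ↔ (z ∈ X ∧ ∀ y ∈ X, V y - dotp p y ≤ V z - dotp p z))) := by
  simp only [coeZR_mem_convexHull_iff, ← mem_demand_toLp_iff]
  constructor
  · intro hconc p z
    refine ⟨fun hz => ?_, fun hz => subset_convexHull ℝ _ (Set.mem_image_of_mem _ hz)⟩
    obtain ⟨q, hq⟩ := hconc z (convexHull_mono (Set.image_mono (demand_subset _)) hz)
    exact mem_demand_of_mem_convexHull hq hz
  · intro H z hz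
    obtain ⟨p, hp⟩ := exists_mem_convexHull_image_demand X _ V hz
    exact ⟨p.ofLp, (H p.ofLp z).1 hp⟩
end

section
/- Let each agent j ∈ J (J finite) have finite feasible set X^j ⊆ ℤ^I, money lower bound m₀^j, and continuous utility u^j strictly increasing in money with the standard limit conditions, and let s^j(x,v) be the compensation function. Fix a utility profile (v^j)_{j∈J} and an allocation (x^j)_{j∈J} with Σ_j x^j = y that minimizes Σ_j s^j(x^j, v^j) over all allocations of the total endowment y. Then, setting m^j = s^j(x^j, v^j), the allocation ((m^j, x^j))_{j∈J} is Pareto-efficient: there is no allocation ((m̂^j, x̂^j))_{j∈J} of feasible consumption bundles with Σ_j (m̂^j, x̂^j) = Σ_j (m^j, x^j) giving every agent weakly higher utility and some agent strictly higher utility. -/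
/-!
In a Pareto improvement `(m̂, x̂)` every agent `j` reaches at least utility `v j` with goods
`x̂ j`, so by strict monotonicity in money `m̂ j ≥ s j (x̂ j) (v j)`, strictly for some agent.
Summing, the goods allocation `x̂` reaches the profile `v` with less money than `x` does.
-/

open Set

theorem sum_lt_sum_of_strictMonoOn_pareto {J : Type*} [Fintype J]
    (f : J → ℝ → ℝ) (a c m : J → ℝ) (hf : ∀ j, StrictMonoOn (f j) (Ioi (a j)))
    (hc : ∀ j, a j < c j) (hm : ∀ j, a j < m j)
    (hle : ∀ j, f j (c j) ≤ f j (m j)) (hlt : ∃ j, f j (c j) < f j (m j)) :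
    ∑ j, c j < ∑ j, m j := by
  obtain ⟨j₀, hj₀⟩ := hlt
  refine Finset.sum_lt_sum (fun j _ => ?_) ⟨j₀, Finset.mem_univ _, ?_⟩
  · exact ((hf j).le_iff_le (hc j) (hm j)).1 (hle j)
  · exact ((hf j₀).lt_iff_lt (hc j₀) (hm j₀)).1 hj₀

theorem expenditure_minimizing_allocation_pareto_efficient_general
    {I J : Type*} [Fintype I] [Fintype J]
    (X : J → Finset (I → ℤ)) (m₀ : J → ℝ) (u : J → ℝ → (I → ℤ) → ℝ)
    (hmono : ∀ j, ∀ x ∈ X j, StrictMonoOn (fun m => u j m x) (Set.Ioi (m₀ j)))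
    (s : J → (I → ℤ) → ℝ → ℝ)
    (hs : ∀ j, ∀ x ∈ X j, ∀ v : ℝ, s j x v > m₀ j ∧ u j (s j x v) x = v)
    (v : J → ℝ) (y : I → ℤ) (x : J → I → ℤ)
    (hxX : ∀ j, x j ∈ X j)
    (hmin : ∀ z : J → I → ℤ, (∀ j, z j ∈ X j) → (∑ j, z j = y) →
        ∑ j, s j (x j) (v j) ≤ ∑ j, s j (z j) (v j)) :
    ¬ ∃ (mhat : J → ℝ) (xhat : J → I → ℤ),
        (∀ j, xhat j ∈ X j) ∧ (∀ j, mhat j > m₀ j) ∧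
        (∑ j, mhat j = ∑ j, s j (x j) (v j)) ∧ (∑ j, xhat j = y) ∧
        (∀ j, u j (s j (x j) (v j)) (x j) ≤ u j (mhat j) (xhat j)) ∧
        (∃ j, u j (s j (x j) (v j)) (x j) < u j (mhat j) (xhat j)) := by
  rintro ⟨mhat, xhat, hxhatX, hmhat, hmsum, hxhatsum, hweak, hstrict⟩
  have hlevel : ∀ j, u j (s j (x j) (v j)) (x j) = u j (s j (xhat j) (v j)) (xhat j) :=
    fun j => by rw [(hs j _ (hxX j) (v j)).2, (hs j _ (hxhatX j) (v j)).2]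
  simp only [hlevel] at hweak hstrict
  have hcost : ∑ j, s j (xhat j) (v j) < ∑ j, mhat j :=
    sum_lt_sum_of_strictMonoOn_pareto (fun j m => u j m (xhat j)) m₀ _ mhat
      (fun j => hmono j _ (hxhatX j)) (fun j => (hs j _ (hxhatX j) (v j)).1) hmhat hweak hstrict
  linarith [hmin xhat hxhatX hxhatsum]

/-- Claim 1: if an allocation of goods minimizes the total money
`Σ_j s^j(x^j,v^j)` needed to reach the utility profile `(v^j)` over all allocations
of the total endowment `y`, then, giving agent `j` money `m^j = s^j(x^j,v^j)`, the
resulting allocation of consumption bundles is Pareto-efficient. -/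
theorem expenditure_minimizing_allocation_pareto_efficient
    {I J : Type*} [Fintype I] [Fintype J]
    (X : J → Finset (I → ℤ)) (m₀ : J → ℝ) (u : J → ℝ → (I → ℤ) → ℝ)
    (hcont : ∀ j, ∀ x ∈ X j, ContinuousOn (fun m => u j m x) (Set.Ioi (m₀ j)))
    (hmono : ∀ j, ∀ x ∈ X j, StrictMonoOn (fun m => u j m x) (Set.Ioi (m₀ j)))
    (s : J → (I → ℤ) → ℝ → ℝ)
    (hs : ∀ j, ∀ x ∈ X j, ∀ v : ℝ, s j x v > m₀ j ∧ u j (s j x v) x = v)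
    (v : J → ℝ) (y : I → ℤ) (x : J → I → ℤ)
    (hxX : ∀ j, x j ∈ X j) (hxsum : ∑ j, x j = y)
    (hmin : ∀ z : J → I → ℤ, (∀ j, z j ∈ X j) → (∑ j, z j = y) →
        ∑ j, s j (x j) (v j) ≤ ∑ j, s j (z j) (v j)) :
    ¬ ∃ (mhat : J → ℝ) (xhat : J → I → ℤ),
        (∀ j, xhat j ∈ X j) ∧ (∀ j, mhat j > m₀ j) ∧
        (∑ j, mhat j = ∑ j, s j (x j) (v j)) ∧ (∑ j, xhat j = y) ∧
        (∀ j, u j (s j (x j) (v j)) (x j) ≤ u j (mhat j) (xhat j)) ∧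
        (∃ j, u j (s j (x j) (v j)) (x j) < u j (mhat j) (xhat j)) :=
  expenditure_minimizing_allocation_pareto_efficient_general X m₀ u hmono s hs v y x hxX hmin
end
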